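/- If n is prime and Γ is a vertex-transitive graph on n vertices with ω(Γ)·α(Γ) = n, then Γ is null or complete. Consequently, every vertex-transitive graph of prime order that is neither null nor complete satisfies ω(Γ)·α(Γ) < n. -/

import Mathlib

/-!
A maximum clique `C` and a maximum independent set `I` of a graph share at most one vertex, and
so do `φ C` and `I` for every automorphism `φ`. Counting the triples `(φ, c, i)` with
`c ∈ C`, `i ∈ I`, `φ c = i` gives at most `|Aut Γ|`; by vertex-transitivity each pair `(c, i)`
is hit by exactly `|Aut Γ| / n` automorphisms, whence `ω(Γ) α(Γ) ≤ n`. If equality holds and `n` is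
prime, one of `ω(Γ)`, `α(Γ)` is `1`, so `Γ` is null or complete.
-/

open SimpleGraph

/-- The independence number of a graph: the clique number of its complement. -/
noncomputable def SimpleGraph.indepNum' {V : Type*} (G : SimpleGraph V) : ℕ :=
  Gᶜ.cliqueNum

/-- A graph is vertex-transitive if its automorphism group is transitive on vertices. -/
def SimpleGraph.IsVertexTransitive {V : Type*} (G : SimpleGraph V) : Prop :=
  ∀ u v : V, ∃ φ : G ≃g G, φ u = v

open Finset

namespace MulAction

variable {Γ X : Type*} [Group Γ] [MulAction Γ X] [IsPretransitive Γ X] [Fintype Γ] [DecidableEq X]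

lemma card_filter_smul_eq_congr_right (a b b' : X) :
    #{g : Γ | g • a = b} = #{g : Γ | g • a = b'} := by
  obtain ⟨h, rfl⟩ := exists_smul_eq Γ b b'
  refine card_bij' (fun g _ => h * g) (fun g _ => h⁻¹ * g) ?_ ?_ ?_ ?_ <;>
    simp +contextual [mul_smul]

lemma card_mul_card_filter_smul_eq [Fintype X] (a b : X) :
    Fintype.card X * #{g : Γ | g • a = b} = Fintype.card Γ := by
  calc Fintype.card X * #{g : Γ | g • a = b}
      = ∑ b' : X, #{g : Γ | g • a = b'} := by
        rw [sum_congr rfl fun b' _ => card_filter_smul_eq_congr_right a b' b, sum_const,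
          card_univ, smul_eq_mul]
    _ = Fintype.card Γ :=
        (card_eq_sum_card_fiberwise (f := (· • a)) fun _ _ => mem_univ _).symm

theorem card_mul_card_le_card_of_subsingleton_smul_inter [Fintype X] (A B : Finset X)
    (h : ∀ g : Γ, ∀ a ∈ A, ∀ a' ∈ A, g • a ∈ B → g • a' ∈ B → a = a') :
    #A * #B ≤ Fintype.card X := by
  have hmeet : ∀ g : Γ, #{p ∈ A ×ˢ B | g • p.1 = p.2} ≤ 1 := by
    refine fun g => card_le_one.mpr ?_
    rintro ⟨a, b⟩ hab ⟨a', b'⟩ hab'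
    simp only [mem_filter, mem_product] at hab hab'
    obtain ⟨⟨ha, hb⟩, rfl⟩ := hab
    obtain ⟨⟨ha', hb'⟩, rfl⟩ := hab'
    obtain rfl := h g a ha a' ha' hb hb'
    rfl
  refine Nat.le_of_mul_le_mul_right ?_ (Fintype.card_pos (α := Γ))
  calc #A * #B * Fintype.card Γ
      = ∑ p ∈ A ×ˢ B, Fintype.card X * #{g : Γ | g • p.1 = p.2} := by
        rw [sum_congr rfl fun p _ => card_mul_card_filter_smul_eq p.1 p.2, sum_const,
          card_product, smul_eq_mul]
    _ = Fintype.card X * ∑ g : Γ, #{p ∈ A ×ˢ B | g • p.1 = p.2} := by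
        simp only [← mul_sum, card_filter]
        rw [sum_comm]
    _ ≤ Fintype.card X * ∑ _g : Γ, 1 := by gcongr with g; exact hmeet g
    _ = Fintype.card X * Fintype.card Γ := by simp

end MulAction

namespace SimpleGraph

variable {V : Type*} {G : SimpleGraph V}

lemma cliqueFree_of_cliqueNum_lt [Finite V] {n : ℕ} (h : G.cliqueNum < n) : G.CliqueFree n :=
  fun _ hs => (hs.card_eq ▸ hs.isClique.card_le_cliqueNum).not_gt h

lemma eq_bot_of_cliqueNum_le_one [Finite V] (h : G.cliqueNum ≤ 1) : G = ⊥ :=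
  cliqueFree_two.mp (cliqueFree_of_cliqueNum_lt (by omega))

lemma eq_top_of_indepNum'_le_one [Finite V] (h : G.indepNum' ≤ 1) : G = ⊤ :=
  compl_eq_bot.mp (eq_bot_of_cliqueNum_le_one h)

lemma eq_bot_or_eq_top_of_prime_cliqueNum_mul_indepNum' [Finite V]
    (h : (G.cliqueNum * G.indepNum').Prime) : G = ⊥ ∨ G = ⊤ := by
  rcases Nat.prime_mul_iff.mp h with ⟨-, hα⟩ | ⟨-, hω⟩
  · exact .inr (eq_top_of_indepNum'_le_one hα.le)
  · exact .inl (eq_bot_of_cliqueNum_le_one hω.le)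

lemma IsVertexTransitive.isPretransitive (hvt : G.IsVertexTransitive) :
    MulAction.IsPretransitive (G ≃g G) V :=
  ⟨hvt⟩

theorem IsVertexTransitive.cliqueNum_mul_indepNum'_le_card [Fintype V]
    (hvt : G.IsVertexTransitive) : G.cliqueNum * G.indepNum' ≤ Fintype.card V := by
  classical
  have := hvt.isPretransitive
  have : Finite (G ≃g G) := .of_injective _ RelIso.toEquiv_injective
  have := Fintype.ofFinite (G ≃g G)
  obtain ⟨C, hC⟩ := G.exists_isNClique_cliqueNum
  obtain ⟨I, hI⟩ := Gᶜ.exists_isNClique_cliqueNum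
  rw [← hC.card_eq, indepNum', ← hI.card_eq]
  refine MulAction.card_mul_card_le_card_of_subsingleton_smul_inter (Γ := G ≃g G) C I ?_
  intro φ c hc c' hc' hφc hφc'
  by_contra hne
  have hadj : G.Adj (φ c) (φ c') := φ.map_rel_iff.mpr (hC.isClique hc hc' hne)
  exact (hI.isClique hφc hφc' hadj.ne).2 hadj

end SimpleGraph

/-- If `Γ` is a vertex-transitive graph on a prime number `n` of vertices with
`ω(Γ)·α(Γ) = n`, then `Γ` is null or complete; consequently every vertex-transitive
graph of prime order which is neither null nor complete has `ω(Γ)·α(Γ) < n`. -/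
theorem stmt_6 {V : Type*} [Fintype V] (G : SimpleGraph V)
    (hvt : G.IsVertexTransitive) (hp : (Fintype.card V).Prime) :
    (G.cliqueNum * G.indepNum' = Fintype.card V → G = ⊥ ∨ G = ⊤) ∧
      (G ≠ ⊥ → G ≠ ⊤ → G.cliqueNum * G.indepNum' < Fintype.card V) := by
  have hextremal : G.cliqueNum * G.indepNum' = Fintype.card V → G = ⊥ ∨ G = ⊤ := fun h =>
    eq_bot_or_eq_top_of_prime_cliqueNum_mul_indepNum' (h ▸ hp)
  refine ⟨hextremal, fun hbot htop => hvt.cliqueNum_mul_indepNum'_le_card.lt_of_ne fun h => ?_⟩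
  rcases hextremal h with h | h <;> contradiction
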